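/- For a commutative Krasner hyperring R with unit and a hyperideal I, the closed set V(I) is an irreducible subspace of Spec(R) if and only if √I is a prime hyperideal. -/
import Mathlib


universe u

/-- A commutative Krasner hyperring with unit: `(R,+)` is a canonical hypergroup
(multivalued addition), `(R,·)` is a commutative monoid, `·` distributes over `+`
and `0` is absorbing. -/
structure KHR (R : Type u) where
  hadd : R → R → Set R
  mul : R → R → R
  zero : R
  one : R
  neg : R → R
  hadd_comm : ∀ a b, hadd a b = hadd b a
  hadd_assoc : ∀ a b c, (⋃ x ∈ hadd a b, hadd x c) = ⋃ y ∈ hadd b c, hadd a y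
  zero_hadd : ∀ a, hadd zero a = {a}
  neg_mem : ∀ a, zero ∈ hadd a (neg a)
  neg_unique : ∀ a b, zero ∈ hadd a b → b = neg a
  reversible : ∀ a b c, c ∈ hadd a b → b ∈ hadd (neg a) c
  mul_assoc : ∀ a b c, mul (mul a b) c = mul a (mul b c)
  mul_comm : ∀ a b, mul a b = mul b a
  one_mul : ∀ a, mul one a = a
  zero_mul : ∀ a, mul zero a = zero
  distrib : ∀ a b c, (fun x => mul a x) '' hadd b c = hadd (mul a b) (mul a c)

namespace KHR

variable {R : Type u} {S : Type u} {T : Type u} {Q : Type u}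

/-- Sum of two subsets: `A + B = ⋃ {a + b : a ∈ A, b ∈ B}`. -/
def sumSet (H : KHR R) (A B : Set R) : Set R := ⋃ a ∈ A, ⋃ b ∈ B, H.hadd a b

/-- The coset `x + I`. -/
def coset (H : KHR R) (x : R) (I : Set R) : Set R := H.sumSet {x} I

/-- Hyperideal of a Krasner hyperring. -/
def IsHyperideal (H : KHR R) (I : Set R) : Prop :=
  H.zero ∈ I ∧ (∀ a ∈ I, ∀ b ∈ I, H.hadd a b ⊆ I) ∧ (∀ a ∈ I, H.neg a ∈ I) ∧
    ∀ r : R, ∀ a ∈ I, H.mul r a ∈ I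

/-- Prime hyperideal. -/
def IsPrime (H : KHR R) (P : Set R) : Prop :=
  H.IsHyperideal P ∧ P ≠ Set.univ ∧ ∀ a b : R, H.mul a b ∈ P → a ∈ P ∨ b ∈ P

/-- Maximal hyperideal. -/
def IsMaximal (H : KHR R) (M : Set R) : Prop :=
  H.IsHyperideal M ∧ M ≠ Set.univ ∧ ∀ J : Set R, H.IsHyperideal J → M ⊂ J → J = Set.univ

/-- The prime spectrum. -/
def Spectrum (H : KHR R) : Type u := {P : Set R // H.IsPrime P}

/-- The Zariski-closed set attached to a set of elements. -/
def V (H : KHR R) (s : Set R) : Set H.Spectrum := {P | s ⊆ P.1}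

/-- The basic Zariski-open set attached to an element. -/
def W (H : KHR R) (x : R) : Set H.Spectrum := {P | x ∉ P.1}

/-- The hyperideal generated by a set. -/
def genIdeal (H : KHR R) (s : Set R) : Set R := ⋂₀ {I | H.IsHyperideal I ∧ s ⊆ I}

/-- The product `IJ` of two hyperideals. -/
def mulIdeal (H : KHR R) (I J : Set R) : Set R :=
  H.genIdeal {x | ∃ a ∈ I, ∃ b ∈ J, x = H.mul a b}

/-- The Zariski topology on the prime spectrum. -/
def zariski (H : KHR R) : TopologicalSpace H.Spectrum :=
  TopologicalSpace.generateFrom {U | ∃ I : Set R, H.IsHyperideal I ∧ U = (H.V I)ᶜ}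

/-- Powers of an element. -/
def pow (H : KHR R) (x : R) : ℕ → R
  | 0 => H.one
  | n+1 => H.mul x (H.pow x n)

/-- The nilradical. -/
def nil (H : KHR R) : Set R := {x | ∃ n : ℕ, H.pow x (n+1) = H.zero}

/-- The radical of a hyperideal. -/
def radical (H : KHR R) (I : Set R) : Set R := {x | ∃ n : ℕ, H.pow x (n+1) ∈ I}

/-- Units. -/
def IsUnit (H : KHR R) (x : R) : Prop := ∃ y, H.mul x y = H.one

/-- Good homomorphism of Krasner hyperrings. -/
structure GoodHom (H : KHR R) (K : KHR S) where
  toFun : R → S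
  map_hadd : ∀ a b, toFun '' H.hadd a b = K.hadd (toFun a) (toFun b)
  map_mul : ∀ a b, toFun (H.mul a b) = K.mul (toFun a) (toFun b)
  map_zero : toFun H.zero = K.zero
  map_one : toFun H.one = K.one

theorem comap_prime (H : KHR R) (K : KHR S) (f : GoodHom H K) {P : Set S}
    (hP : K.IsPrime P) : H.IsPrime (f.toFun ⁻¹' P) := by
  obtain ⟨⟨h0, haddc, hneg, hmulc⟩, hne, hpr⟩ := hP
  refine ⟨⟨?_, ?_, ?_, ?_⟩, ?_, ?_⟩
  · show f.toFun H.zero ∈ P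
    rw [f.map_zero]; exact h0
  · intro a ha b hb c hc
    have : f.toFun c ∈ K.hadd (f.toFun a) (f.toFun b) := by
      rw [← f.map_hadd]; exact ⟨c, hc, rfl⟩
    exact haddc _ ha _ hb this
  · intro a ha
    have hz : K.zero ∈ K.hadd (f.toFun a) (f.toFun (H.neg a)) := by
      rw [← f.map_hadd, ← f.map_zero]
      exact ⟨H.zero, H.neg_mem a, rfl⟩
    have : f.toFun (H.neg a) = K.neg (f.toFun a) := K.neg_unique _ _ hz
    show f.toFun (H.neg a) ∈ P
    rw [this]; exact hneg _ ha
  · intro r a ha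
    show f.toFun (H.mul r a) ∈ P
    rw [f.map_mul]; exact hmulc _ _ ha
  · intro hU
    apply hne
    ext s
    simp only [Set.mem_univ, iff_true]
    have h1 : f.toFun H.one ∈ P := by
      have : H.one ∈ f.toFun ⁻¹' P := by rw [hU]; trivial
      exact this
    have : K.mul s (f.toFun H.one) ∈ P := hmulc s _ h1
    rwa [f.map_one, K.mul_comm, K.one_mul] at this
  · intro a b hab
    have : K.mul (f.toFun a) (f.toFun b) ∈ P := by rw [← f.map_mul]; exact hab
    exact hpr _ _ this

/-- The induced map on spectra. -/
def specMap (H : KHR R) (K : KHR S) (f : GoodHom H K) : K.Spectrum → H.Spectrum :=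
  fun P => ⟨f.toFun ⁻¹' P.1, comap_prime H K f P.2⟩

/-- `K` is the quotient hyperring of `H` by the hyperideal `I`, witnessed by the
canonical projection. -/
structure IsQuotient (H : KHR R) (K : KHR Q) (I : Set R) where
  hom : GoodHom H K
  surj : Function.Surjective hom.toFun
  fiber : ∀ x y, hom.toFun x = hom.toFun y ↔ H.coset x I = H.coset y I

/-- Strongly regular (equivalence) relation on a Krasner hyperring. -/
def StronglyRegular (H : KHR R) (ρ : R → R → Prop) : Prop :=
  Equivalence ρ ∧ ∀ a b c d, ρ a b → ρ c d →
    (∀ x ∈ H.hadd a c, ∀ y ∈ H.hadd b d, ρ x y) ∧ ρ (H.mul a c) (H.mul b d)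

/-- The fundamental relation `γ*`: the smallest strongly regular relation. -/
def gamma (H : KHR R) : R → R → Prop := fun x y => ∀ ρ, H.StronglyRegular ρ → ρ x y

/-- The zero class `γ*(0)` of the fundamental relation. -/
def gammaZero (H : KHR R) : Set R := {x | H.gamma x H.zero}



/-- The product of two Krasner hyperrings, with componentwise hyperoperations. -/
def prodKHR (H : KHR R) (K : KHR S) : KHR (R × S) where
  hadd a b := H.hadd a.1 b.1 ×ˢ K.hadd a.2 b.2
  mul a b := (H.mul a.1 b.1, K.mul a.2 b.2)
  zero := (H.zero, K.zero)
  one := (H.one, K.one)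
  neg a := (H.neg a.1, K.neg a.2)
  hadd_comm a b := by beta_reduce; rw [H.hadd_comm, K.hadd_comm]
  hadd_assoc a b c := by
    beta_reduce
    have h1 := H.hadd_assoc a.1 b.1 c.1
    have h2 := K.hadd_assoc a.2 b.2 c.2
    ext ⟨p, q⟩
    have e1 : p ∈ (⋃ x ∈ H.hadd a.1 b.1, H.hadd x c.1) ↔
        p ∈ ⋃ y ∈ H.hadd b.1 c.1, H.hadd a.1 y := by rw [h1]
    have e2 : q ∈ (⋃ x ∈ K.hadd a.2 b.2, K.hadd x c.2) ↔
        q ∈ ⋃ y ∈ K.hadd b.2 c.2, K.hadd a.2 y := by rw [h2]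
    simp only [Set.mem_iUnion, Set.mem_prod] at e1 e2 ⊢
    constructor
    · rintro ⟨⟨x1, x2⟩, ⟨⟨hx1, hx2⟩, hp, hq⟩⟩
      obtain ⟨y1, hy1, hp'⟩ := e1.1 ⟨x1, hx1, hp⟩
      obtain ⟨y2, hy2, hq'⟩ := e2.1 ⟨x2, hx2, hq⟩
      exact ⟨(y1, y2), ⟨hy1, hy2⟩, hp', hq'⟩
    · rintro ⟨⟨y1, y2⟩, ⟨⟨hy1, hy2⟩, hp, hq⟩⟩
      obtain ⟨x1, hx1, hp'⟩ := e1.2 ⟨y1, hy1, hp⟩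
      obtain ⟨x2, hx2, hq'⟩ := e2.2 ⟨y2, hy2, hq⟩
      exact ⟨(x1, x2), ⟨hx1, hx2⟩, hp', hq'⟩
  zero_hadd a := by
    beta_reduce
    rw [H.zero_hadd, K.zero_hadd, Set.singleton_prod_singleton]
  neg_mem a := ⟨H.neg_mem a.1, K.neg_mem a.2⟩
  neg_unique a b h := Prod.ext (H.neg_unique _ _ h.1) (K.neg_unique _ _ h.2)
  reversible a b c h := ⟨H.reversible _ _ _ h.1, K.reversible _ _ _ h.2⟩
  mul_assoc a b c := Prod.ext (H.mul_assoc _ _ _) (K.mul_assoc _ _ _)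
  mul_comm a b := Prod.ext (H.mul_comm _ _) (K.mul_comm _ _)
  one_mul a := Prod.ext (H.one_mul _) (K.one_mul _)
  zero_mul a := Prod.ext (H.zero_mul _) (K.zero_mul _)
  distrib a b c := by
    ext ⟨p, q⟩
    simp only [Set.mem_image, Set.mem_prod]
    constructor
    · rintro ⟨⟨x, y⟩, ⟨hx, hy⟩, h⟩
      obtain ⟨h1, h2⟩ := Prod.mk.injEq .. ▸ h
      constructor
      · rw [← H.distrib]; exact ⟨x, hx, h1⟩
      · rw [← K.distrib]; exact ⟨y, hy, h2⟩
    · rintro ⟨hp, hq⟩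
      rw [← H.distrib] at hp
      rw [← K.distrib] at hq
      obtain ⟨x, hx, hx'⟩ := hp
      obtain ⟨y, hy, hy'⟩ := hq
      exact ⟨(x, y), ⟨hx, hy⟩, by simp [hx', hy']⟩


end KHR

namespace KHR

variable {R : Type u} (H : KHR R)

lemma mul_one' (a : R) : H.mul a H.one = a := by rw [H.mul_comm, H.one_mul]

lemma hadd_zero' (a : R) : H.hadd a H.zero = {a} := by rw [H.hadd_comm, H.zero_hadd]

lemma pow_one' (x : R) : H.pow x 1 = x := by
  show H.mul x (H.pow x 0) = x
  show H.mul x H.one = x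
  exact H.mul_one' x

lemma pow_add' (x : R) (m n : ℕ) : H.pow x (m + n) = H.mul (H.pow x m) (H.pow x n) := by
  induction m with
  | zero =>
      rw [Nat.zero_add]
      show H.pow x n = H.mul H.one (H.pow x n)
      rw [H.one_mul]
  | succ k ih =>
      have e : k + 1 + n = (k + n) + 1 := by omega
      rw [e]
      show H.mul x (H.pow x (k + n)) = H.mul (H.mul x (H.pow x k)) (H.pow x n)
      rw [ih, ← H.mul_assoc]

lemma prime_one_not_mem {P : Set R} (hP : H.IsPrime P) : H.one ∉ P := by
  intro h1
  apply hP.2.1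
  ext r
  simp only [Set.mem_univ, iff_true]
  have := hP.1.2.2.2 r H.one h1
  rwa [H.mul_one'] at this

lemma pow_mem_prime {P : Set R} (hP : H.IsPrime P) (x : R) :
    ∀ n : ℕ, H.pow x (n + 1) ∈ P → x ∈ P := by
  intro n
  induction n with
  | zero => intro h; rwa [H.pow_one'] at h
  | succ k ih =>
      intro h
      have h' : H.mul x (H.pow x (k + 1)) ∈ P := h
      rcases hP.2.2 x (H.pow x (k + 1)) h' with h2 | h2
      · exact h2
      · exact ih h2

lemma radical_subset_prime {I P : Set R} (hIP : I ⊆ P) (hP : H.IsPrime P) :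
    H.radical I ⊆ P := fun x hx => by
  obtain ⟨n, hn⟩ := hx
  exact H.pow_mem_prime hP x n (hIP hn)

lemma subset_radical {I : Set R} : I ⊆ H.radical I := fun x hx =>
  ⟨0, by rwa [H.pow_one']⟩

lemma neg_mem_hadd {m w z : R} (h : z ∈ H.hadd m w) :
    H.neg z ∈ H.hadd (H.neg m) (H.neg w) := by
  have h1 : w ∈ H.hadd (H.neg m) z := H.reversible _ _ _ h
  rw [H.hadd_comm] at h1
  have h2 : H.neg m ∈ H.hadd (H.neg z) w := H.reversible _ _ _ h1
  rw [H.hadd_comm] at h2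
  have h3 : H.neg z ∈ H.hadd (H.neg w) (H.neg m) := H.reversible _ _ _ h2
  rwa [H.hadd_comm] at h3

lemma neg_mul' (r a : R) : H.neg (H.mul r a) = H.mul (H.neg r) a := by
  have h0 : H.zero ∈ H.hadd r (H.neg r) := H.neg_mem r
  have hm : H.mul a H.zero ∈ (fun x => H.mul a x) '' H.hadd r (H.neg r) := ⟨_, h0, rfl⟩
  rw [H.distrib] at hm
  rw [H.mul_comm a H.zero, H.zero_mul] at hm
  have hu := H.neg_unique _ _ hm
  rw [H.mul_comm r a, ← hu, H.mul_comm]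

lemma assoc_mem {a b c x t : R} (hx : x ∈ H.hadd a b) (ht : t ∈ H.hadd x c) :
    ∃ y ∈ H.hadd b c, t ∈ H.hadd a y := by
  have h : t ∈ ⋃ x ∈ H.hadd a b, H.hadd x c := Set.mem_biUnion hx ht
  rw [H.hadd_assoc] at h
  simpa using h

lemma assoc_mem' {a b c y t : R} (hy : y ∈ H.hadd b c) (ht : t ∈ H.hadd a y) :
    ∃ x ∈ H.hadd a b, t ∈ H.hadd x c := by
  have h : t ∈ ⋃ y ∈ H.hadd b c, H.hadd a y := Set.mem_biUnion hy ht
  rw [← H.hadd_assoc] at h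
  simpa using h

lemma medial {m1 w1 m2 w2 z1 z2 t : R} (h1 : z1 ∈ H.hadd m1 w1)
    (h2 : z2 ∈ H.hadd m2 w2) (ht : t ∈ H.hadd z1 z2) :
    ∃ m ∈ H.hadd m1 m2, ∃ w ∈ H.hadd w1 w2, t ∈ H.hadd m w := by
  obtain ⟨y1, hy1, ht1⟩ := H.assoc_mem h1 ht
  obtain ⟨x2, hx2, hy1'⟩ := H.assoc_mem' h2 hy1
  obtain ⟨x3, hx3, ht3⟩ := H.assoc_mem' hy1' ht1
  rw [H.hadd_comm] at hx2
  obtain ⟨x4, hx4, hx3'⟩ := H.assoc_mem' hx2 hx3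
  obtain ⟨y2, hy2, ht4⟩ := H.assoc_mem hx3' ht3
  exact ⟨x4, hx4, y2, hy2, ht4⟩

/-- The ideal extension `M + Ra`. -/
def extSet (H : KHR R) (M : Set R) (a : R) : Set R :=
  {t | ∃ m ∈ M, ∃ r : R, t ∈ H.hadd m (H.mul r a)}

lemma mem_extSet_self {M : Set R} (hM : H.IsHyperideal M) (a : R) : a ∈ H.extSet M a := by
  refine ⟨H.zero, hM.1, H.one, ?_⟩
  rw [H.one_mul, H.zero_hadd]
  exact rfl

lemma subset_extSet {M : Set R} (a : R) : M ⊆ H.extSet M a := by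
  intro m hm
  refine ⟨m, hm, H.zero, ?_⟩
  rw [H.zero_mul, H.hadd_zero']
  exact rfl

lemma extSet_hyperideal {M : Set R} (hM : H.IsHyperideal M) (a : R) :
    H.IsHyperideal (H.extSet M a) := by
  obtain ⟨h0, haddc, hnegc, hmulc⟩ := hM
  refine ⟨H.subset_extSet a h0, ?_, ?_, ?_⟩
  · rintro z1 ⟨m1, hm1, r1, hz1⟩ z2 ⟨m2, hm2, r2, hz2⟩ t ht
    obtain ⟨m, hm, w, hw, htm⟩ := H.medial hz1 hz2 ht
    have hw' : w ∈ (fun x => H.mul a x) '' H.hadd r1 r2 := by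
      rw [H.distrib, H.mul_comm a r1, H.mul_comm a r2]
      exact hw
    obtain ⟨s, hs, hws⟩ := hw'
    refine ⟨m, haddc _ hm1 _ hm2 hm, s, ?_⟩
    have hws' : H.mul a s = w := hws
    rw [H.mul_comm s a, hws']
    exact htm
  · rintro z ⟨m, hm, r, hz⟩
    refine ⟨H.neg m, hnegc _ hm, H.neg r, ?_⟩
    have := H.neg_mem_hadd hz
    rwa [H.neg_mul'] at this
  · rintro s z ⟨m, hm, r, hz⟩
    refine ⟨H.mul s m, hmulc s m hm, H.mul s r, ?_⟩
    have himg : H.mul s z ∈ (fun x => H.mul s x) '' H.hadd m (H.mul r a) := ⟨z, hz, rfl⟩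
    rw [H.distrib] at himg
    rw [H.mul_assoc]
    exact himg

lemma extSet_mul_mem {M : Set R} (hM : H.IsHyperideal M) {a b z1 z2 : R}
    (hab : H.mul a b ∈ M) (h1 : z1 ∈ H.extSet M a) (h2 : z2 ∈ H.extSet M b) :
    H.mul z1 z2 ∈ M := by
  obtain ⟨m1, hm1, r1, hz1⟩ := h1
  obtain ⟨m2, hm2, r2, hz2⟩ := h2
  obtain ⟨h0, haddc, hnegc, hmulc⟩ := hM
  have hb1 : H.mul b z1 ∈ M := by
    have himg : H.mul b z1 ∈ (fun x => H.mul b x) '' H.hadd m1 (H.mul r1 a) := ⟨z1, hz1, rfl⟩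
    rw [H.distrib] at himg
    have e : H.mul b (H.mul r1 a) = H.mul r1 (H.mul a b) := by
      rw [← H.mul_assoc, H.mul_comm b r1, H.mul_assoc, H.mul_comm b a]
    rw [e] at himg
    exact haddc _ (hmulc b m1 hm1) _ (hmulc r1 _ hab) himg
  have himg : H.mul z1 z2 ∈ (fun x => H.mul z1 x) '' H.hadd m2 (H.mul r2 b) := ⟨z2, hz2, rfl⟩
  rw [H.distrib] at himg
  have e2 : H.mul z1 (H.mul r2 b) = H.mul r2 (H.mul b z1) := by
    rw [← H.mul_assoc, H.mul_comm z1 r2, H.mul_assoc, H.mul_comm z1 b]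
  rw [e2] at himg
  exact haddc _ (hmulc z1 m2 hm2) _ (hmulc r2 _ hb1) himg

lemma exists_prime_avoiding {I : Set R} (hI : H.IsHyperideal I) {x : R}
    (hx : x ∉ H.radical I) : ∃ P : Set R, H.IsPrime P ∧ I ⊆ P ∧ x ∉ P := by
  set S : Set (Set R) := {J | H.IsHyperideal J ∧ I ⊆ J ∧ ∀ n : ℕ, H.pow x (n + 1) ∉ J}
    with hS
  have hIS : I ∈ S := ⟨hI, le_refl _, fun n hn => hx ⟨n, hn⟩⟩
  have hchainub : ∀ c ⊆ S, IsChain (· ⊆ ·) c → c.Nonempty →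
      ∃ ub ∈ S, ∀ s ∈ c, s ⊆ ub := by
    intro c hcS hchain hcne
    obtain ⟨J0, hJ0⟩ := hcne
    have hsub : ∀ J ∈ c, J ⊆ ⋃₀ c := fun J hJ => Set.subset_sUnion_of_mem hJ
    refine ⟨⋃₀ c, ⟨⟨?_, ?_, ?_, ?_⟩, ?_, ?_⟩, hsub⟩
    · exact hsub J0 hJ0 (hcS hJ0).1.1
    · rintro p ⟨J1, hJ1, hp⟩ q ⟨J2, hJ2, hq⟩
      rcases eq_or_ne J1 J2 with h | h
      · subst h
        exact fun t ht => hsub J1 hJ1 ((hcS hJ1).1.2.1 p hp q hq ht)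
      · rcases hchain hJ1 hJ2 h with h12 | h21
        · exact fun t ht => hsub J2 hJ2 ((hcS hJ2).1.2.1 p (h12 hp) q hq ht)
        · exact fun t ht => hsub J1 hJ1 ((hcS hJ1).1.2.1 p hp q (h21 hq) ht)
    · rintro p ⟨J1, hJ1, hp⟩
      exact hsub J1 hJ1 ((hcS hJ1).1.2.2.1 p hp)
    · rintro r p ⟨J1, hJ1, hp⟩
      exact hsub J1 hJ1 ((hcS hJ1).1.2.2.2 r p hp)
    · exact (hcS hJ0).2.1.trans (hsub J0 hJ0)
    · rintro n ⟨J1, hJ1, hp⟩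
      exact (hcS hJ1).2.2 n hp
  obtain ⟨M, hIM, hMS, hmax⟩ := zorn_subset_nonempty S hchainub I hIS
  · have hMmem : M ∈ S := hMS
    obtain ⟨hMideal, hIM', hMpow⟩ := hMmem
    have hxM : x ∉ M := fun h => hMpow 0 (by rwa [H.pow_one'])
    have hMne : M ≠ Set.univ := fun h => hxM (h ▸ Set.mem_univ x)
    refine ⟨M, ⟨hMideal, hMne, ?_⟩, hIM', hxM⟩
    intro a b hab
    by_contra hcon
    push_neg at hcon
    obtain ⟨ha, hb⟩ := hcon
    have key : ∀ c : R, c ∉ M → ∃ m : ℕ, H.pow x (m + 1) ∈ H.extSet M c := by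
      intro c hc
      by_contra hpow
      push_neg at hpow
      have hDS : H.extSet M c ∈ S :=
        ⟨H.extSet_hyperideal hMideal c, hIM'.trans (H.subset_extSet c), hpow⟩
      have := hmax hDS (H.subset_extSet c)
      exact hc (this (H.mem_extSet_self hMideal c))
    obtain ⟨m, hma⟩ := key a ha
    obtain ⟨k, hkb⟩ := key b hb
    have hprod : H.mul (H.pow x (m + 1)) (H.pow x (k + 1)) ∈ M :=
      H.extSet_mul_mem hMideal hab hma hkb
    have : H.pow x ((m + k + 1) + 1) ∈ M := by
      have e : (m + k + 1) + 1 = (m + 1) + (k + 1) := by omega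
      rw [e, H.pow_add']
      exact hprod
    exact hMpow _ this

lemma radical_eq_sInter {I : Set R} (hI : H.IsHyperideal I) :
    H.radical I = ⋂₀ {P | H.IsPrime P ∧ I ⊆ P} := by
  apply Set.Subset.antisymm
  · intro y hy
    exact Set.mem_sInter.2 fun P hP => H.radical_subset_prime hP.2 hP.1 hy
  · intro y hy
    by_contra hyr
    obtain ⟨P, hP, hIP, hyP⟩ := H.exists_prime_avoiding hI hyr
    exact hyP (Set.mem_sInter.1 hy P ⟨hP, hIP⟩)

lemma radical_hyperideal {I : Set R} (hI : H.IsHyperideal I) :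
    H.IsHyperideal (H.radical I) := by
  have h0 : H.zero ∈ H.radical I := H.subset_radical hI.1
  rw [H.radical_eq_sInter hI] at h0 ⊢
  refine ⟨h0, ?_, ?_, ?_⟩
  · intro p hp q hq t ht
    exact Set.mem_sInter.2 fun P hP =>
      hP.1.1.2.1 p (Set.mem_sInter.1 hp P hP) q (Set.mem_sInter.1 hq P hP) ht
  · intro p hp
    exact Set.mem_sInter.2 fun P hP => hP.1.1.2.2.1 p (Set.mem_sInter.1 hp P hP)
  · intro r p hp
    exact Set.mem_sInter.2 fun P hP => hP.1.1.2.2.2 r p (Set.mem_sInter.1 hp P hP)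

lemma univ_hyperideal : H.IsHyperideal (Set.univ : Set R) :=
  ⟨trivial, fun _ _ _ _ => Set.subset_univ _, fun _ _ => trivial, fun _ _ _ => trivial⟩

lemma genIdeal_hyperideal (s : Set R) : H.IsHyperideal (H.genIdeal s) := by
  refine ⟨?_, ?_, ?_, ?_⟩
  · exact Set.mem_sInter.2 fun J hJ => hJ.1.1
  · intro p hp q hq t ht
    exact Set.mem_sInter.2 fun J hJ =>
      hJ.1.2.1 p (Set.mem_sInter.1 hp J hJ) q (Set.mem_sInter.1 hq J hJ) ht
  · intro p hp
    exact Set.mem_sInter.2 fun J hJ => hJ.1.2.2.1 p (Set.mem_sInter.1 hp J hJ)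
  · intro r p hp
    exact Set.mem_sInter.2 fun J hJ => hJ.1.2.2.2 r p (Set.mem_sInter.1 hp J hJ)

lemma mem_genIdeal_self {s : Set R} {a : R} (ha : a ∈ s) : a ∈ H.genIdeal s :=
  Set.mem_sInter.2 fun _ hJ => hJ.2 ha

lemma genIdeal_subset {s J : Set R} (hJ : H.IsHyperideal J) (h : s ⊆ J) :
    H.genIdeal s ⊆ J := Set.sInter_subset_of_mem ⟨hJ, h⟩

lemma isOpen_W' (a : R) : @IsOpen H.Spectrum H.zariski {P : H.Spectrum | a ∉ P.1} := by
  have heq : {P : H.Spectrum | a ∉ P.1} = (H.V (H.genIdeal {a}))ᶜ := by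
    ext P
    simp only [Set.mem_setOf_eq, Set.mem_compl_iff, V]
    constructor
    · intro ha hsub
      exact ha (hsub (H.mem_genIdeal_self rfl))
    · intro h ha
      exact h (H.genIdeal_subset P.2.1 (Set.singleton_subset_iff.2 ha))
  rw [heq]
  exact TopologicalSpace.GenerateOpen.basic _ ⟨H.genIdeal {a}, H.genIdeal_hyperideal _, rfl⟩

lemma open_specializes {u : Set H.Spectrum} (hu : @IsOpen H.Spectrum H.zariski u)
    {P Q : H.Spectrum} (hPQ : P.1 ⊆ Q.1) (hQ : Q ∈ u) : P ∈ u := by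
  have hu' : TopologicalSpace.GenerateOpen
      {U | ∃ I : Set R, H.IsHyperideal I ∧ U = (H.V I)ᶜ} u := hu
  clear hu
  revert hQ
  induction hu' with
  | basic v hv =>
      obtain ⟨J, hJ, rfl⟩ := hv
      intro hQ h
      exact hQ (h.trans hPQ)
  | univ => intro _; trivial
  | inter u v _ _ ihu ihv =>
      intro h
      exact ⟨ihu h.1, ihv h.2⟩
  | sUnion S _ ih =>
      rintro ⟨v, hv, hQv⟩
      exact ⟨v, hv, ih v hv hQv⟩

end KHR

/-- For a hyperideal `I`, the closed set `V(I)` is an irreducible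
subspace of `Spec R` iff `√I` is a prime hyperideal. -/
theorem stmt14 {R : Type u} (H : KHR R) (I : Set R) (hI : H.IsHyperideal I) :
    @IsIrreducible H.Spectrum H.zariski (H.V I) ↔ H.IsPrime (H.radical I) := by
  constructor
  · rintro ⟨⟨P1, hP1⟩, hpre⟩
    refine ⟨H.radical_hyperideal hI, ?_, ?_⟩
    · intro hU
      have hsub : H.radical I ⊆ P1.1 := H.radical_subset_prime hP1 P1.2
      rw [hU] at hsub
      exact P1.2.2.1 (Set.eq_univ_of_univ_subset hsub)
    · intro a b hab
      by_contra hcon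
      push_neg at hcon
      obtain ⟨ha, hb⟩ := hcon
      obtain ⟨Pa, hPaP, hIPa, haPa⟩ := H.exists_prime_avoiding hI ha
      obtain ⟨Pb, hPbP, hIPb, hbPb⟩ := H.exists_prime_avoiding hI hb
      obtain ⟨P, hPI, hPa, hPb⟩ := hpre {P | a ∉ P.1} {P | b ∉ P.1}
        (H.isOpen_W' a) (H.isOpen_W' b)
        ⟨⟨Pa, hPaP⟩, hIPa, haPa⟩ ⟨⟨Pb, hPbP⟩, hIPb, hbPb⟩
      have habP : H.mul a b ∈ P.1 := H.radical_subset_prime hPI P.2 hab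
      rcases P.2.2.2 a b habP with h | h
      · exact hPa h
      · exact hPb h
  · intro hrad
    refine ⟨⟨⟨H.radical I, hrad⟩, H.subset_radical⟩, ?_⟩
    rintro u v hu hv ⟨P1, h1I, h1u⟩ ⟨P2, h2I, h2v⟩
    refine ⟨⟨H.radical I, hrad⟩, H.subset_radical, ?_, ?_⟩
    · exact H.open_specializes hu (H.radical_subset_prime h1I P1.2) h1u
    · exact H.open_specializes hv (H.radical_subset_prime h2I P2.2) h2v
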